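/- arXiv:2508.03790 — 2 statements merged into one kernel-verified Lean document; each statement's English description precedes it below -/
import Mathlib

section
/- Let X be exponentially distributed with density e^{−x} on (0,∞), and let f : ℝ → ℝ be a smooth nonnegative function, not identically zero, with compact support in (0, 1). Then Var[f(X)] + 3·E[f(X)]² − 2·E[f(X)]·E[X·f(X)] ≥ Var[f(X)] + E[f(X)]² > Var[f(X)]. -/
open MeasureTheory

theorem stmt_10 (f : ℝ → ℝ) (hf : ContDiff ℝ (⊤ : ℕ∞) f) (hnonneg : ∀ x, 0 ≤ f x)
    (hne : f ≠ 0) (hsupp : HasCompactSupport f)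
    (hsub : tsupport f ⊆ Set.Ioo 0 1) :
    ((∫ x in Set.Ioi (0 : ℝ), f x ^ 2 * Real.exp (-x))
        - (∫ x in Set.Ioi (0 : ℝ), f x * Real.exp (-x)) ^ 2)
      + 3 * (∫ x in Set.Ioi (0 : ℝ), f x * Real.exp (-x)) ^ 2
      - 2 * (∫ x in Set.Ioi (0 : ℝ), f x * Real.exp (-x))
          * (∫ x in Set.Ioi (0 : ℝ), x * f x * Real.exp (-x))
      ≥ ((∫ x in Set.Ioi (0 : ℝ), f x ^ 2 * Real.exp (-x))
          - (∫ x in Set.Ioi (0 : ℝ), f x * Real.exp (-x)) ^ 2)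
        + (∫ x in Set.Ioi (0 : ℝ), f x * Real.exp (-x)) ^ 2 ∧
    ((∫ x in Set.Ioi (0 : ℝ), f x ^ 2 * Real.exp (-x))
        - (∫ x in Set.Ioi (0 : ℝ), f x * Real.exp (-x)) ^ 2)
      + (∫ x in Set.Ioi (0 : ℝ), f x * Real.exp (-x)) ^ 2
      > ((∫ x in Set.Ioi (0 : ℝ), f x ^ 2 * Real.exp (-x))
          - (∫ x in Set.Ioi (0 : ℝ), f x * Real.exp (-x)) ^ 2) := by
  have hfc : Continuous f := hf.continuous
  set A := ∫ x in Set.Ioi (0 : ℝ), f x * Real.exp (-x) with hAdef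
  set B := ∫ x in Set.Ioi (0 : ℝ), x * f x * Real.exp (-x) with hBdef
  -- integrability
  have hcont1 : Continuous fun x : ℝ => f x * Real.exp (-x) :=
    hfc.mul (Real.continuous_exp.comp continuous_neg)
  have hcs1 : HasCompactSupport fun x : ℝ => f x * Real.exp (-x) :=
    hsupp.mul_right
  have hint1 : IntegrableOn (fun x : ℝ => f x * Real.exp (-x)) (Set.Ioi 0) :=
    (hcont1.integrable_of_hasCompactSupport hcs1).integrableOn
  have hcont2 : Continuous fun x : ℝ => x * f x * Real.exp (-x) :=
    (continuous_id.mul hfc).mul (Real.continuous_exp.comp continuous_neg)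
  have hcs2 : HasCompactSupport fun x : ℝ => x * f x * Real.exp (-x) := by
    have : HasCompactSupport fun x : ℝ => x * f x := hsupp.mul_left
    exact this.mul_right
  have hint2 : IntegrableOn (fun x : ℝ => x * f x * Real.exp (-x)) (Set.Ioi 0) :=
    (hcont2.integrable_of_hasCompactSupport hcs2).integrableOn
  -- B ≤ A
  have hBA : B ≤ A := by
    refine setIntegral_mono_on hint2 hint1 measurableSet_Ioi ?_
    intro x hx
    by_cases hfx : f x = 0
    · simp [hfx]
    · have hxmem : x ∈ tsupport f := subset_tsupport f hfx
      have hx1 : x < 1 := (hsub hxmem).2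
      have h1 : x * f x ≤ f x := by nlinarith [hnonneg x]
      exact mul_le_mul_of_nonneg_right h1 (Real.exp_pos _).le
  -- A > 0
  have hApos : 0 < A := by
    rw [hAdef]
    rw [setIntegral_pos_iff_support_of_nonneg_ae]
    · -- measure of support positive
      obtain ⟨x0, hx0⟩ : ∃ x, f x ≠ 0 := by
        by_contra h
        push_neg at h
        exact hne (funext fun x => h x)
      have hx0mem : x0 ∈ tsupport f := subset_tsupport f hx0
      have hx0pos : 0 < f x0 := lt_of_le_of_ne (hnonneg x0) (Ne.symm hx0)
      have hopen : IsOpen {x : ℝ | 0 < f x} := isOpen_lt continuous_const hfc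
      obtain ⟨ε, hε, hball⟩ := Metric.isOpen_iff.1 hopen x0 hx0pos
      have hsubset : Metric.ball x0 (min ε (x0)) ⊆
          (Function.support fun x => f x * Real.exp (-x)) ∩ Set.Ioi 0 := by
        intro y hy
        have hy1 : y ∈ Metric.ball x0 ε :=
          Metric.ball_subset_ball (min_le_left _ _) hy
        have hfy : 0 < f y := hball hy1
        have hy2 : y ∈ Metric.ball x0 x0 :=
          Metric.ball_subset_ball (min_le_right _ _) hy
        have hy0 : 0 < y := by
          rw [Metric.mem_ball, Real.dist_eq] at hy2
          cases abs_lt.1 hy2 with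
          | intro h1 h2 => linarith
        refine ⟨?_, hy0⟩
        simp only [Function.mem_support]
        positivity
      have hx0pos' : 0 < x0 := (hsub hx0mem).1
      have hrpos : 0 < min ε x0 := lt_min hε hx0pos'
      calc (0 : ENNReal) < volume (Metric.ball x0 (min ε x0)) := by
            rw [Real.volume_ball]; exact ENNReal.ofReal_pos.2 (by positivity)
        _ ≤ _ := measure_mono hsubset
    · filter_upwards with x
      have := hnonneg x
      have := (Real.exp_pos (-x)).le
      positivity
    · exact hint1
  constructor
  · nlinarith
  · nlinarith
end

section
/- Let f : ℝ → ℝ be smooth with compact support and let X be a standard normal random variable. Then Var[f(X)] − E[f'(X)]² − (1/2)·E[f''(X)]² ≥ 0. -/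
open MeasureTheory ProbabilityTheory Real
open scoped ENNReal NNReal

noncomputable def phi : ℝ → ℝ := gaussianPDFReal 0 1

lemma phi_eq (x : ℝ) : phi x = (Real.sqrt (2 * Real.pi))⁻¹ * Real.exp (-(1/2) * x ^ 2) := by
  simp only [phi, gaussianPDFReal, NNReal.coe_one, mul_one, sub_zero]
  congr 1
  ring_nf

lemma phi_cont : Continuous phi := by
  simp only [phi, gaussianPDFReal_def]
  fun_prop

lemma phi_nonneg (x : ℝ) : 0 ≤ phi x := gaussianPDFReal_nonneg 0 1 x

lemma phi_hasDeriv (x : ℝ) : HasDerivAt phi (-x * phi x) x := by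
  have h1 : HasDerivAt (fun x : ℝ => -(1/2) * x ^ 2) (-x) x := by
    have := (hasDerivAt_pow 2 x).const_mul (-(1/2) : ℝ)
    simpa using this.congr_deriv (by ring)
  have h2 := (h1.exp).const_mul (Real.sqrt (2 * Real.pi))⁻¹
  have : HasDerivAt (fun x : ℝ => (Real.sqrt (2 * Real.pi))⁻¹ * Real.exp (-(1/2) * x ^ 2))
      (-x * phi x) x := by
    exact h2.congr_deriv (by rw [phi_eq]; ring)
  exact this.congr_of_eventuallyEq (Filter.Eventually.of_forall fun y => (phi_eq y))

lemma int_pow_phi (n : ℕ) : Integrable (fun x : ℝ => x ^ n * phi x) := by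
  have h : Integrable (fun x : ℝ => x ^ n * Real.exp (-(1/2) * x ^ 2)) := by
    have := integrable_rpow_mul_exp_neg_mul_sq (b := 1/2) (by norm_num) (s := (n : ℝ))
      (by exact lt_of_lt_of_le neg_one_lt_zero (Nat.cast_nonneg n))
    simpa [Real.rpow_natCast] using this
  have := (h.const_mul (Real.sqrt (2 * Real.pi))⁻¹)
  apply this.congr
  filter_upwards with x
  rw [phi_eq]; ring

lemma integral_gauss (g : ℝ → ℝ) :
    ∫ x, g x ∂(gaussianReal 0 1) = ∫ x, g x * phi x := by
  rw [gaussianReal_of_var_ne_zero 0 one_ne_zero]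
  have : (gaussianPDF 0 1) = fun x => ((phi x).toNNReal : ℝ≥0∞) := by
    ext x; simp [gaussianPDF, ENNReal.ofReal, phi]
  rw [this]
  rw [integral_withDensity_eq_integral_smul
    (by
      apply Measurable.real_toNNReal
      exact phi_cont.measurable)]
  congr 1; ext x
  simp [NNReal.smul_def, Real.coe_toNNReal _ (phi_nonneg x), mul_comm]

lemma ibp (g : ℝ → ℝ) (hg : Differentiable ℝ g)
    (h1 : Integrable (fun x => g x * phi x))
    (h2 : Integrable (fun x => deriv g x * phi x))
    (h3 : Integrable (fun x => x * g x * phi x)) :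
    ∫ x, deriv g x * phi x = ∫ x, x * g x * phi x := by
  have hd : ∀ x : ℝ, HasDerivAt (fun y => g y * phi y)
      (deriv g x * phi x - x * g x * phi x) x := by
    intro x
    have := ((hg x).hasDerivAt).mul (phi_hasDeriv x)
    exact this.congr_deriv (by ring)
  have h0 : ∫ x, (deriv g x * phi x - x * g x * phi x) = 0 :=
    integral_eq_zero_of_hasDerivAt_of_integrable hd (h2.sub h3) h1
  rw [integral_sub h2 h3] at h0
  linarith

lemma M0 : ∫ x, phi x = 1 := integral_gaussianPDFReal_eq_one 0 one_ne_zero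

lemma M1 : ∫ x, x * phi x = 0 := by
  have := ibp (fun _ => (1 : ℝ)) (differentiable_const 1)
    (by simpa using int_pow_phi 0) (by simp) (by simpa using int_pow_phi 1)
  simpa using this.symm

lemma M2 : ∫ x, x ^ 2 * phi x = 1 := by
  have := ibp (fun x => x) differentiable_fun_id
    (by simpa using int_pow_phi 1) (by simpa using int_pow_phi 0)
    (by simpa [sq, mul_assoc] using int_pow_phi 2)
  simp only [deriv_id'', one_mul] at this
  rw [M0] at this
  rw [show (∫ x, x ^ 2 * phi x) = ∫ x, x * x * phi x by congr 1; ext x; ring]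
  exact this.symm

lemma M3 : ∫ x, x ^ 3 * phi x = 0 := by
  have h := ibp (fun x => x ^ 2) (differentiable_pow 2)
    (by simpa using int_pow_phi 2)
    (by
      have := (int_pow_phi 1).const_mul 2
      apply this.congr; filter_upwards with x
      simp only [deriv_pow_field]
      ring)
    (by
      have := int_pow_phi 3
      apply this.congr; filter_upwards with x; ring)
  have hL : ∫ x, deriv (fun x : ℝ => x ^ 2) x * phi x = 2 * ∫ x, x * phi x := by
    rw [← integral_const_mul]
    congr 1; ext x
    simp only [deriv_pow_field]
    ring
  rw [hL, M1, mul_zero] at h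
  rw [show (∫ x, x ^ 3 * phi x) = ∫ x, x * x ^ 2 * phi x by congr 1; ext x; ring]
  exact h.symm

lemma M4 : ∫ x, x ^ 4 * phi x = 3 := by
  have h := ibp (fun x => x ^ 3) (differentiable_pow 3)
    (by simpa using int_pow_phi 3)
    (by
      have := (int_pow_phi 2).const_mul 3
      apply this.congr; filter_upwards with x
      simp only [deriv_pow_field]
      ring)
    (by
      have := int_pow_phi 4
      apply this.congr; filter_upwards with x; ring)
  have hL : ∫ x, deriv (fun x : ℝ => x ^ 3) x * phi x = 3 * ∫ x, x ^ 2 * phi x := by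
    rw [← integral_const_mul]
    congr 1; ext x
    simp only [deriv_pow_field]
    ring
  rw [hL, M2, mul_one] at h
  rw [show (∫ x, x ^ 4 * phi x) = ∫ x, x * x ^ 3 * phi x by congr 1; ext x; ring]
  exact h.symm

theorem stmt_18 (f : ℝ → ℝ) (hf : ContDiff ℝ (⊤ : ℕ∞) f) (hsupp : HasCompactSupport f) :
    0 ≤ ((∫ x, f x ^ 2 ∂(gaussianReal 0 1)) - (∫ x, f x ∂(gaussianReal 0 1)) ^ 2)
        - (∫ x, deriv f x ∂(gaussianReal 0 1)) ^ 2
        - (1 / 2) * (∫ x, deriv (deriv f) x ∂(gaussianReal 0 1)) ^ 2 := by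
  have hfi : ContDiff ℝ (⊤ : ℕ∞) f := hf.of_le (by simp)
  have contf : Continuous f := hf.continuous
  have hf' : ContDiff ℝ (⊤ : ℕ∞) (deriv f) := (contDiff_infty_iff_deriv.mp hfi).2
  have contf' : Continuous (deriv f) := hf'.continuous
  have contf'' : Continuous (deriv (deriv f)) := (contDiff_infty_iff_deriv.mp hf').2.continuous
  have hs' : HasCompactSupport (deriv f) := hsupp.deriv
  have hs'' : HasCompactSupport (deriv (deriv f)) := hs'.deriv
  have key : ∀ u : ℝ → ℝ, Continuous u → HasCompactSupport u →
      Integrable (fun x => u x * phi x) := fun u hu hsu =>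
    (hu.mul phi_cont).integrable_of_hasCompactSupport (hsu.mul_right)
  have keyx : ∀ u : ℝ → ℝ, Continuous u → HasCompactSupport u →
      Integrable (fun x => x * u x * phi x) := fun u hu hsu =>
    key _ (continuous_id.mul hu) (hsu.mul_left)
  have keyx2 : ∀ u : ℝ → ℝ, Continuous u → HasCompactSupport u →
      Integrable (fun x => x ^ 2 * u x * phi x) := fun u hu hsu =>
    key _ ((continuous_pow 2).mul hu) (hsu.mul_left)
  set m := ∫ x, f x * phi x with hm
  set a := ∫ x, x * f x * phi x with ha
  set c := ∫ x, x ^ 2 * f x * phi x with hc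
  set K := ∫ x, f x ^ 2 * phi x with hK
  -- rewrite the four Gaussian integrals
  have E1 : ∫ x, f x ∂(gaussianReal 0 1) = m := integral_gauss f
  have E2 : ∫ x, f x ^ 2 ∂(gaussianReal 0 1) = K := integral_gauss _
  have E3 : ∫ x, deriv f x ∂(gaussianReal 0 1) = a := by
    rw [integral_gauss]
    exact ibp f (hfi.differentiable (by simp)) (key f contf hsupp)
      (key _ contf' hs') (keyx f contf hsupp)
  have idf : Differentiable ℝ (fun x : ℝ => x * f x) :=
    differentiable_fun_id.mul (hfi.differentiable (by simp))
  have hD : deriv (fun y => y * f y) = fun x => f x + x * deriv f x := by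
    funext x
    rw [((hasDerivAt_id' (x := x)).fun_mul ((hfi.differentiable (by simp) x).hasDerivAt)).deriv]
    ring
  have hcs : HasCompactSupport (fun x : ℝ => x * f x) := hsupp.mul_left
  have E4 : ∫ x, deriv (deriv f) x ∂(gaussianReal 0 1) = c - m := by
    rw [integral_gauss]
    have step1 : ∫ x, deriv (deriv f) x * phi x = ∫ x, x * deriv f x * phi x :=
      ibp (deriv f) (hf'.differentiable (by simp)) (key _ contf' hs')
        (key _ contf'' hs'') (keyx _ contf' hs')
    have step2 : ∫ x, deriv (fun y => y * f y) x * phi x = ∫ x, x * (x * f x) * phi x :=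
      ibp (fun y => y * f y) idf (key _ (continuous_id.mul contf) hcs)
        (by
          rw [hD]
          exact ((key f contf hsupp).add (keyx _ contf' hs')).congr
            (Filter.Eventually.of_forall fun x => by simp only [Pi.add_apply]; ring))
        (keyx _ (continuous_id.mul contf) hcs)
    have lhs2 : ∫ x, deriv (fun y => y * f y) x * phi x = m + ∫ x, x * deriv f x * phi x := by
      rw [hD, ← integral_add (key f contf hsupp) (keyx _ contf' hs')]
      congr 1; funext x; ring
    have rhs2 : ∫ x, x * (x * f x) * phi x = c := by
      rw [hc]; congr 1; funext x; ring
    rw [lhs2, rhs2] at step2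
    rw [step1]
    linarith
  rw [E1, E2, E3, E4]
  set d : ℝ := (c - m) / 2 with hd
  -- integrability of all nine terms
  have hsq : HasCompactSupport (fun x : ℝ => f x ^ 2) := by
    have : (fun x : ℝ => f x ^ 2) = fun x => f x * f x := by funext x; ring
    rw [this]
    exact hsupp.mul_right
  have i1 : Integrable (fun x : ℝ => f x ^ 2 * phi x) := key _ (contf.pow 2) hsq
  have i2 : Integrable (fun x : ℝ => (-2 * (m - d)) * (f x * phi x)) :=
    (key f contf hsupp).const_mul _
  have i3 : Integrable (fun x : ℝ => (-2 * a) * (x * f x * phi x)) :=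
    (keyx f contf hsupp).const_mul _
  have i4 : Integrable (fun x : ℝ => (-2 * d) * (x ^ 2 * f x * phi x)) :=
    (keyx2 f contf hsupp).const_mul _
  have i5 : Integrable (fun x : ℝ => (m - d) ^ 2 * phi x) :=
    ((int_pow_phi 0).congr (Filter.Eventually.of_forall fun x => by simp)).const_mul _
  have i6 : Integrable (fun x : ℝ => (2 * a * (m - d)) * (x * phi x)) :=
    ((int_pow_phi 1).congr (Filter.Eventually.of_forall fun x => by simp)).const_mul _
  have i7 : Integrable (fun x : ℝ => (a ^ 2 + 2 * d * (m - d)) * (x ^ 2 * phi x)) :=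
    (int_pow_phi 2).const_mul _
  have i8 : Integrable (fun x : ℝ => (2 * a * d) * (x ^ 3 * phi x)) :=
    (int_pow_phi 3).const_mul _
  have i9 : Integrable (fun x : ℝ => d ^ 2 * (x ^ 4 * phi x)) :=
    (int_pow_phi 4).const_mul _
  have hnn : 0 ≤ ∫ x, (f x - (m - d) - a * x - d * x ^ 2) ^ 2 * phi x :=
    integral_nonneg fun x => mul_nonneg (sq_nonneg _) (phi_nonneg x)
  have hexp : (fun x => (f x - (m - d) - a * x - d * x ^ 2) ^ 2 * phi x)
      = fun x => f x ^ 2 * phi x + ((-2 * (m - d)) * (f x * phi x)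
        + ((-2 * a) * (x * f x * phi x) + ((-2 * d) * (x ^ 2 * f x * phi x)
        + ((m - d) ^ 2 * phi x + ((2 * a * (m - d)) * (x * phi x)
        + ((a ^ 2 + 2 * d * (m - d)) * (x ^ 2 * phi x) + ((2 * a * d) * (x ^ 3 * phi x)
        + d ^ 2 * (x ^ 4 * phi x)))))))) := by
    funext x; ring
  rw [hexp] at hnn
  have j9 : Integrable (fun x : ℝ => (2 * a * d) * (x ^ 3 * phi x)
      + d ^ 2 * (x ^ 4 * phi x)) := i8.add i9
  have j8 : Integrable (fun x : ℝ => (a ^ 2 + 2 * d * (m - d)) * (x ^ 2 * phi x)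
      + ((2 * a * d) * (x ^ 3 * phi x) + d ^ 2 * (x ^ 4 * phi x))) := i7.add j9
  have j7 : Integrable (fun x : ℝ => (2 * a * (m - d)) * (x * phi x)
      + ((a ^ 2 + 2 * d * (m - d)) * (x ^ 2 * phi x) + ((2 * a * d) * (x ^ 3 * phi x)
      + d ^ 2 * (x ^ 4 * phi x)))) := i6.add j8
  have j6 : Integrable (fun x : ℝ => (m - d) ^ 2 * phi x + ((2 * a * (m - d)) * (x * phi x)
      + ((a ^ 2 + 2 * d * (m - d)) * (x ^ 2 * phi x) + ((2 * a * d) * (x ^ 3 * phi x)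
      + d ^ 2 * (x ^ 4 * phi x))))) := i5.add j7
  have j5 : Integrable (fun x : ℝ => (-2 * d) * (x ^ 2 * f x * phi x)
      + ((m - d) ^ 2 * phi x + ((2 * a * (m - d)) * (x * phi x)
      + ((a ^ 2 + 2 * d * (m - d)) * (x ^ 2 * phi x) + ((2 * a * d) * (x ^ 3 * phi x)
      + d ^ 2 * (x ^ 4 * phi x)))))) := i4.add j6
  have j4 : Integrable (fun x : ℝ => (-2 * a) * (x * f x * phi x)
      + ((-2 * d) * (x ^ 2 * f x * phi x)
      + ((m - d) ^ 2 * phi x + ((2 * a * (m - d)) * (x * phi x)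
      + ((a ^ 2 + 2 * d * (m - d)) * (x ^ 2 * phi x) + ((2 * a * d) * (x ^ 3 * phi x)
      + d ^ 2 * (x ^ 4 * phi x))))))) := i3.add j5
  have j3 : Integrable (fun x : ℝ => (-2 * (m - d)) * (f x * phi x)
      + ((-2 * a) * (x * f x * phi x) + ((-2 * d) * (x ^ 2 * f x * phi x)
      + ((m - d) ^ 2 * phi x + ((2 * a * (m - d)) * (x * phi x)
      + ((a ^ 2 + 2 * d * (m - d)) * (x ^ 2 * phi x) + ((2 * a * d) * (x ^ 3 * phi x)
      + d ^ 2 * (x ^ 4 * phi x)))))))) := i2.add j4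
  rw [integral_add i1 j3, integral_add i2 j4, integral_add i3 j5, integral_add i4 j6,
    integral_add i5 j7, integral_add i6 j8, integral_add i7 j9, integral_add i8 i9,
    integral_const_mul, integral_const_mul, integral_const_mul, integral_const_mul,
    integral_const_mul, integral_const_mul, integral_const_mul, integral_const_mul,
    M0, M1, M2, M3, M4, ← hm, ← ha, ← hc, ← hK] at hnn
  nlinarith [hnn]
end
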